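/- arXiv:2004.11907 — 6 statements merged into one kernel-verified Lean document; each statement's English description precedes it below -/
import Mathlib

section
/- Let B = (b_1,...,b_n) be a weakly increasing word and let w be any rearrangement of B. Among all permutations σ ∈ S_n with (b_{σ⁻¹(1)},...,b_{σ⁻¹(n)}) = w, there is a unique one of minimal Coxeter length, and its length equals the number of inversions of the word w (pairs i<j with w_i > w_j). -/
/-- The number of inversions of a word `w`: pairs `i < j` with `w i > w j`. -/
def invNum {n : ℕ} (w : Fin n → ℕ) : ℕ :=
  (Finset.univ.filter (fun p : Fin n × Fin n => p.1 < p.2 ∧ w p.2 < w p.1)).card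

/-- The Coxeter length of a permutation of `Fin n`: its number of inversions. -/
def permLen {n : ℕ} (σ : Equiv.Perm (Fin n)) : ℕ :=
  (Finset.univ.filter (fun p : Fin n × Fin n => p.1 < p.2 ∧ σ p.2 < σ p.1)).card

/-!
Write `w = b ∘ σ⁻¹`. The map `(i, j) ↦ (σ⁻¹ j, σ⁻¹ i)` identifies the inversions of `w` with the
inversions of `σ` joining two different letters of `b`, so `ℓ(σ)` exceeds `inv(w)` by the number
of inversions of `σ` between equal letters of `b`. Hence `ℓ(σ) = inv(w)` exactly when `σ` is
increasing on each block of equal letters, and this characterizes the stable sorting permutation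
`Tuple.sort w`.
-/

open Finset

section

variable {n : ℕ} {b : Fin n → ℕ}

lemma invNum_comp_symm (hb : Monotone b) (σ : Equiv.Perm (Fin n)) :
    invNum (b ∘ σ.symm) = #{p : Fin n × Fin n | p.1 < p.2 ∧ σ p.2 < σ p.1 ∧ b p.1 < b p.2} := by
  unfold invNum
  refine card_nbij' (fun p => (σ.symm p.2, σ.symm p.1)) (fun p => (σ p.2, σ p.1)) ?_ ?_ ?_ ?_ <;>
    simp only [coe_filter, mem_univ, true_and, Set.MapsTo, Set.LeftInvOn, Set.mem_ofPred_eq,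
      Function.comp_apply, Equiv.apply_symm_apply, Equiv.symm_apply_apply, Prod.forall,
      implies_true]
  · exact fun i j ⟨hij, hw⟩ => ⟨hb.reflect_lt hw, hij, hw⟩
  · exact fun p q ⟨_, hσ, hlt⟩ => ⟨hσ, hlt⟩

lemma permLen_eq_invNum_add (hb : Monotone b) (σ : Equiv.Perm (Fin n)) :
    permLen σ = invNum (b ∘ σ.symm) +
      #{p : Fin n × Fin n | p.1 < p.2 ∧ σ p.2 < σ p.1 ∧ b p.1 = b p.2} := by
  rw [invNum_comp_symm hb, permLen, ← card_filter_add_card_filter_not (fun p => b p.1 < b p.2),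
    filter_filter, filter_filter]
  congr 2
  · ext p; simp only [and_assoc]
  · ext ⟨p, q⟩
    simp only [mem_filter, mem_univ, true_and]
    constructor
    · rintro ⟨⟨hpq, hσ⟩, hlt⟩
      exact ⟨hpq, hσ, (hb hpq.le).eq_of_not_lt hlt⟩
    · rintro ⟨hpq, hσ, heq⟩
      exact ⟨⟨hpq, hσ⟩, heq.not_lt⟩

lemma invNum_le_permLen (hb : Monotone b) (σ : Equiv.Perm (Fin n)) :
    invNum (b ∘ σ.symm) ≤ permLen σ :=
  (permLen_eq_invNum_add hb σ).symm ▸ Nat.le_add_right _ _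

lemma permLen_eq_invNum_iff (hb : Monotone b) (σ : Equiv.Perm (Fin n)) :
    permLen σ = invNum (b ∘ σ.symm) ↔ ∀ i j, i < j → b i = b j → σ i < σ j := by
  rw [permLen_eq_invNum_add hb, add_eq_left, card_eq_zero, filter_eq_empty_iff]
  simp only [mem_univ, true_implies, Prod.forall, not_and]
  refine forall₂_congr fun i j => forall_congr' fun hij => ?_
  rw [imp_not_comm, not_lt, (σ.injective.ne hij.ne).le_iff_lt]

lemma eq_sort_iff_permLen_eq_invNum (hb : Monotone b) (σ : Equiv.Perm (Fin n)) :
    σ = Tuple.sort (b ∘ σ.symm) ↔ permLen σ = invNum (b ∘ σ.symm) := by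
  rw [Tuple.eq_sort_iff, permLen_eq_invNum_iff hb]
  simp [Function.comp_def, hb]

lemma comp_symm_sort (hb : Monotone b) (σ : Equiv.Perm (Fin n)) :
    b ∘ (Tuple.sort (b ∘ σ.symm)).symm = b ∘ σ.symm := by
  set w := b ∘ σ.symm
  have h : w ∘ σ = w ∘ Tuple.sort w :=
    Tuple.unique_monotone (by simpa [w, Function.comp_def] using hb) (Tuple.monotone_sort w)
  calc b ∘ (Tuple.sort w).symm = (w ∘ Tuple.sort w) ∘ (Tuple.sort w).symm := by
        rw [← h]; ext; simp [w]
    _ = w := by ext; simp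

lemma permLen_sort (hb : Monotone b) (σ : Equiv.Perm (Fin n)) :
    permLen (Tuple.sort (b ∘ σ.symm)) = invNum (b ∘ σ.symm) := by
  have hs := comp_symm_sort hb σ
  have h := (eq_sort_iff_permLen_eq_invNum hb (Tuple.sort (b ∘ σ.symm))).1 (by rw [hs])
  rwa [hs] at h

end

/-- Let `b` be a weakly increasing word and `w` a rearrangement of `b`.  Among all
permutations `σ` with `(b ∘ σ.symm) = w` (i.e. `w i = b (σ⁻¹ i)` for all `i`), there is a
unique one of minimal Coxeter length, and its length equals the number of inversions of
the word `w`. -/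
theorem stmt1 {n : ℕ} (b : Fin n → ℕ) (hb : Monotone b) (w : Fin n → ℕ)
    (hw : ∃ σ : Equiv.Perm (Fin n), w = b ∘ ⇑σ.symm) :
    ∃! σ : Equiv.Perm (Fin n),
      (b ∘ ⇑σ.symm = w ∧
        (∀ τ : Equiv.Perm (Fin n), b ∘ ⇑τ.symm = w → permLen σ ≤ permLen τ)) ∧
      permLen σ = invNum w := by
  obtain ⟨σ, rfl⟩ := hw
  refine ⟨Tuple.sort (b ∘ σ.symm), ⟨⟨comp_symm_sort hb σ, fun τ hτ => ?_⟩, permLen_sort hb σ⟩, ?_⟩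
  · rw [permLen_sort hb σ, ← hτ]
    exact invNum_le_permLen hb τ
  · rintro τ ⟨⟨hτ, -⟩, hτlen⟩
    rw [← hτ] at hτlen ⊢
    exact (eq_sort_iff_permLen_eq_invNum hb τ).2 hτlen
end

section
/- For every permutation v ≤ w in Bruhat order and every fixed reduced expression w = s_{i_t}···s_{i_1}, the positive distinguished subexpression (PDS) of v, defined greedily from right to left by setting v_{(0)} = v and v_{(j)} = v_{(j-1)} s_{i_j} if this decreases length and v_{(j)} = v_{(j-1)} otherwise, terminates with v_{(t)} = identity, and the selected simple reflections read in order form a reduced expression for v. -/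
/-- The simple transposition `s_a = (a, a+1)` of `Fin n` (as an element of `S_n`),
defined to be the identity if `a + 1 ≥ n`.  (Here positions are 0-indexed, so `sT n a`
corresponds to the simple transposition `s_{a+1}` in 1-indexed notation.) -/
def sT (n : ℕ) (a : ℕ) : Equiv.Perm (Fin n) :=
  if h : a + 1 < n then Equiv.swap ⟨a, Nat.lt_of_succ_lt h⟩ ⟨a + 1, h⟩ else 1

/-- The group element of the expression `s_{i_t} ⋯ s_{i_1}` encoded by the list
`[i_t, …, i_1]` (leftmost letter first), where permutations are multiplied left to right
(i.e. acting on the right), so that `exprProd (a :: l) = exprProd l * sT n a`. -/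
def exprProd (n : ℕ) (l : List ℕ) : Equiv.Perm (Fin n) :=
  l.foldr (fun a g => g * sT n a) 1

/-- A word is reduced if its length equals the Coxeter length of its product. -/
def IsReducedW (n : ℕ) (l : List ℕ) : Prop :=
  permLen (exprProd n l) = l.length

/-- Greedy right-to-left computation of the positive distinguished subexpression:
the input list is the word read from the right (`ω.reverse`); the state is
`v_{(j)}`, and a letter is selected exactly when right-multiplying by it decreases
length.  Returns the final state `v_{(t)}` together with the selected letters in
processing order (right to left). -/
def pdsAux (n : ℕ) : Equiv.Perm (Fin n) → List ℕ → Equiv.Perm (Fin n) × List ℕ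
  | v, [] => (v, [])
  | v, a :: rest =>
    if permLen (sT n a * v) < permLen v then
      ((pdsAux n (sT n a * v) rest).1, a :: (pdsAux n (sT n a * v) rest).2)
    else pdsAux n v rest

/-- The positive distinguished subexpression of `v` inside the word `ω`
(read in word order, leftmost letter first). -/
def pds (n : ℕ) (v : Equiv.Perm (Fin n)) (ω : List ℕ) : List ℕ :=
  (pdsAux n v ω.reverse).2.reverse

/-!
The greedy procedure keeps the invariant that the current element `u` has a reduced expression
which is a subword of the letters not yet read. If the next letter `s` is a descent of `u`
(`ℓ(s u) < ℓ(u)`), the strong exchange property turns such a subword into one for `s u` avoiding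
that letter (or the subword simply starts with `s`); if it is not a descent, no reduced subword
for `u` can start with `s`, so the same subword stays available. Each selected letter lowers the
length by exactly one, hence the procedure ends at the identity and the selected letters form a
word of length `ℓ(v)` with product `v`.
-/

open Equiv

section SimpleTransposition

variable {n : ℕ}

lemma permLen_one : permLen (1 : Perm (Fin n)) = 0 := by
  rw [permLen, Finset.card_eq_zero, Finset.filter_eq_empty_iff]
  exact fun p _ h => lt_asymm h.1 h.2

lemma sT_mul_self (a : ℕ) : sT n a * sT n a = 1 := by
  unfold sT
  split_ifs <;> simp

lemma sT_inv (a : ℕ) : (sT n a)⁻¹ = sT n a :=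
  inv_eq_of_mul_eq_one_right (sT_mul_self a)

lemma swap_apply_lt_swap_apply_iff {i j x y : Fin n} (hij : (j : ℕ) = i + 1)
    (h₁ : ¬(x = i ∧ y = j)) (h₂ : ¬(x = j ∧ y = i)) :
    swap i j x < swap i j y ↔ x < y := by
  simp only [swap_apply_def]
  split_ifs <;> simp only [Fin.lt_def, Fin.ext_iff] at * <;> omega

lemma sT_apply_lt_sT_apply_iff {a : ℕ} {x y : Fin n} (h : swap x y ≠ sT n a) :
    sT n a x < sT n a y ↔ x < y := by
  unfold sT at *
  split_ifs at *
  · refine swap_apply_lt_swap_apply_iff rfl ?_ ?_ <;> rintro ⟨rfl, rfl⟩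
    · exact h rfl
    · exact h (swap_comm _ _)
  · rfl

/-- Left multiplication by an adjacent transposition `(i j)` changes the inversion set only in the
pair of positions holding the values `i` and `j`. -/
lemma permLen_swap_mul_of_lt {i j : Fin n} (hij : (j : ℕ) = i + 1) {v : Perm (Fin n)}
    (hv : v⁻¹ i < v⁻¹ j) : permLen (swap i j * v) = permLen v + 1 := by
  set p₀ : Fin n × Fin n := (v⁻¹ i, v⁻¹ j)
  have hi_lt_j : i < j := by simp [Fin.lt_def, hij]
  have hp₀ : p₀ ∉ Finset.univ.filter (fun p : Fin n × Fin n => p.1 < p.2 ∧ v p.2 < v p.1) := by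
    simp [p₀, hi_lt_j.le]
  have hinv : ∀ p : Fin n × Fin n, p.1 < p.2 → p ≠ p₀ →
      (swap i j (v p.2) < swap i j (v p.1) ↔ v p.2 < v p.1) := by
    rintro ⟨x, y⟩ hxy hne
    refine swap_apply_lt_swap_apply_iff hij ?_ ?_ <;> rintro ⟨hy, hx⟩
    · exact lt_asymm hxy (by simpa [← hx, ← hy] using hv)
    · exact hne (by simp [p₀, ← hx, ← hy])
  have hfilter : Finset.univ.filter
        (fun p : Fin n × Fin n => p.1 < p.2 ∧ (swap i j * v) p.2 < (swap i j * v) p.1) =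
      Finset.cons p₀ (Finset.univ.filter
        (fun p : Fin n × Fin n => p.1 < p.2 ∧ v p.2 < v p.1)) hp₀ := by
    ext p
    rw [Finset.mem_filter_univ, Finset.mem_cons, Finset.mem_filter_univ, Perm.mul_apply,
      Perm.mul_apply]
    by_cases hp : p = p₀
    · subst hp
      simpa [p₀, hi_lt_j] using hv
    · rw [or_iff_right hp]
      exact and_congr_right fun hlt => hinv p hlt hp
  rw [permLen, permLen, hfilter, Finset.card_cons]

lemma permLen_sT_mul_le (a : ℕ) (v : Perm (Fin n)) : permLen (sT n a * v) ≤ permLen v + 1 := by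
  unfold sT
  split_ifs with ha
  · set i : Fin n := ⟨a, by omega⟩
    set j : Fin n := ⟨a + 1, ha⟩
    rcases lt_or_gt_of_ne (v⁻¹.injective.ne (show i ≠ j by simp [i, j, Fin.ext_iff]))
      with h | h
    · exact (permLen_swap_mul_of_lt rfl h).le
    · have := permLen_swap_mul_of_lt (i := i) (j := j) (v := swap i j * v) rfl
         (by simpa [mul_inv_rev, swap_apply_left, swap_apply_right] using h)
      rw [swap_mul_self_mul] at this
      omega
  · simp

lemma permLen_sT_mul_add_one_of_lt {a : ℕ} {v : Perm (Fin n)}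
    (h : permLen (sT n a * v) < permLen v) : permLen (sT n a * v) + 1 = permLen v := by
  have := permLen_sT_mul_le a (sT n a * v)
  rw [← mul_assoc, sT_mul_self, one_mul] at this
  omega

lemma exists_swap_eq_sT_of_permLen_sT_mul_lt {a : ℕ} {v : Perm (Fin n)}
    (h : permLen (sT n a * v) < permLen v) :
    ∃ x y : Fin n, x < y ∧ v⁻¹ y < v⁻¹ x ∧ swap x y = sT n a := by
  unfold sT at *
  split_ifs at *
  · refine ⟨_, _, by simp [Fin.lt_def], ?_, rfl⟩
    by_contra! hle
    have := permLen_swap_mul_of_lt rfl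
      (lt_of_le_of_ne hle (v⁻¹.injective.ne (by simp [Fin.ext_iff])))
    omega
  · simp at h

end SimpleTransposition

section Words

variable {n : ℕ}

lemma exprProd_eq_prod_map_reverse (l : List ℕ) :
    exprProd n l = (l.reverse.map (sT n)).prod := by
  induction l with
  | nil => rfl
  | cons a l ih =>
    change exprProd n l * sT n a = _
    simp [ih]

lemma permLen_prod_map_sT_le (m : List ℕ) : permLen (m.map (sT n)).prod ≤ m.length := by
  induction m with
  | nil => simp [permLen_one]
  | cons a m ih => simpa using (permLen_sT_mul_le a _).trans (by omega)

/-- The strong exchange property of `S_n`, for the reflection `(x y)`. -/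
lemma exists_sublist_prod_eq_swap_mul (m : List ℕ) {x y : Fin n} (hxy : x < y)
    (h : (m.map (sT n)).prod⁻¹ y < (m.map (sT n)).prod⁻¹ x) :
    ∃ m' : List ℕ, m'.Sublist m ∧ (m'.map (sT n)).prod = swap x y * (m.map (sT n)).prod ∧
      m'.length + 1 = m.length := by
  induction m generalizing x y with
  | nil => exact absurd h (by simpa using hxy.not_gt)
  | cons b m ih =>
    by_cases hb : swap x y = sT n b
    · exact ⟨m, m.sublist_cons_self b, by simp [hb, ← mul_assoc, sT_mul_self], rfl⟩
    · have hsxy : sT n b x < sT n b y := (sT_apply_lt_sT_apply_iff hb).2 hxy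
      have h' : (m.map (sT n)).prod⁻¹ (sT n b y) < (m.map (sT n)).prod⁻¹ (sT n b x) := by
        simpa [mul_inv_rev, sT_inv] using h
      obtain ⟨m', hsub, hprod, hlen⟩ := ih hsxy h'
      refine ⟨b :: m', hsub.cons_cons b, ?_, by simp [hlen]⟩
      simp only [List.map_cons, List.prod_cons, hprod, swap_apply_apply, sT_inv, ← mul_assoc,
        sT_mul_self, one_mul]

lemma exists_reduced_sublist_sT_mul {a : ℕ} {R m : List ℕ} {v : Perm (Fin n)}
    (hm : m.Sublist (a :: R)) (hprod : (m.map (sT n)).prod = v) (hlen : m.length = permLen v)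
    (hdesc : permLen (sT n a * v) < permLen v) :
    ∃ m' : List ℕ, m'.Sublist R ∧ (m'.map (sT n)).prod = sT n a * v ∧
      m'.length = permLen (sT n a * v) := by
  have hlen' := permLen_sT_mul_add_one_of_lt hdesc
  rcases List.sublist_cons_iff.1 hm with hmR | ⟨m₀, rfl, hm₀⟩
  · obtain ⟨x, y, hxy, hinv, hs⟩ := exists_swap_eq_sT_of_permLen_sT_mul_lt hdesc
    obtain ⟨m', hsub, hprod', hlen''⟩ := exists_sublist_prod_eq_swap_mul m hxy (hprod ▸ hinv)
    exact ⟨m', hsub.trans hmR, by rw [hprod', hprod, hs], by omega⟩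
  · refine ⟨m₀, hm₀, by simp [← hprod, ← mul_assoc, sT_mul_self], ?_⟩
    rw [List.length_cons] at hlen
    omega

lemma sublist_of_not_permLen_sT_mul_lt {a : ℕ} {R m : List ℕ} {v : Perm (Fin n)}
    (hm : m.Sublist (a :: R)) (hprod : (m.map (sT n)).prod = v) (hlen : m.length = permLen v)
    (hasc : ¬permLen (sT n a * v) < permLen v) : m.Sublist R := by
  rcases List.sublist_cons_iff.1 hm with hmR | ⟨m₀, rfl, -⟩
  · exact hmR
  · have hv : (m₀.map (sT n)).prod = sT n a * v := by
      simp [← hprod, ← mul_assoc, sT_mul_self]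
    have := permLen_prod_map_sT_le (n := n) m₀
    rw [hv] at this
    rw [List.length_cons] at hlen
    omega

theorem pdsAux_spec (R : List ℕ) {v : Perm (Fin n)} {m : List ℕ} (hm : m.Sublist R)
    (hprod : (m.map (sT n)).prod = v) (hlen : m.length = permLen v) :
    (pdsAux n v R).1 = 1 ∧ ((pdsAux n v R).2.map (sT n)).prod = v ∧
      (pdsAux n v R).2.length = permLen v := by
  induction R generalizing v m with
  | nil =>
    obtain rfl := List.sublist_nil.1 hm
    subst hprod
    simp [pdsAux, permLen_one]
  | cons a R ih =>
    by_cases hdesc : permLen (sT n a * v) < permLen v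
    · obtain ⟨m', hm', hprod', hlen'⟩ := exists_reduced_sublist_sT_mul hm hprod hlen hdesc
      obtain ⟨hone, hprod'', hlen''⟩ := ih hm' hprod' hlen'
      rw [pdsAux, if_pos hdesc]
      refine ⟨hone, by simp [hprod'', ← mul_assoc, sT_mul_self], ?_⟩
      rw [List.length_cons, hlen'', permLen_sT_mul_add_one_of_lt hdesc]
    · rw [pdsAux, if_neg hdesc]
      exact ih (sublist_of_not_permLen_sT_mul_lt hm hprod hlen hdesc) hprod hlen

end Words

theorem stmt2_general (n : ℕ) (v : Equiv.Perm (Fin n)) (ω : List ℕ)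
    (hbruhat : ∃ l : List ℕ, l.Sublist ω ∧ IsReducedW n l ∧ exprProd n l = v) :
    (pdsAux n v ω.reverse).1 = 1 ∧
      IsReducedW n (pds n v ω) ∧ exprProd n (pds n v ω) = v := by
  obtain ⟨l, hsub, hred, hprod⟩ := hbruhat
  rw [IsReducedW, hprod] at hred
  rw [exprProd_eq_prod_map_reverse] at hprod
  obtain ⟨hone, hprod', hlen⟩ :=
    pdsAux_spec ω.reverse hsub.reverse hprod (by rw [List.length_reverse, hred])
  have hpds : exprProd n (pds n v ω) = v := by
    rw [pds, exprProd_eq_prod_map_reverse, List.reverse_reverse, hprod']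
  exact ⟨hone, by rw [IsReducedW, hpds, pds, List.length_reverse, hlen], hpds⟩

/-- For `v ≤ w` in Bruhat order (expressed via the subword property: some sublist of the
fixed reduced word `ω` for `w` is a reduced word for `v`), the greedy positive
distinguished subexpression procedure terminates at the identity, and the selected
simple reflections, read in word order, form a reduced expression for `v`. -/
theorem stmt2 (n : ℕ) (w v : Equiv.Perm (Fin n)) (ω : List ℕ)
    (hletters : ∀ a ∈ ω, a + 1 < n)
    (hred : IsReducedW n ω) (hw : exprProd n ω = w)
    (hbruhat : ∃ l : List ℕ, l.Sublist ω ∧ IsReducedW n l ∧ exprProd n l = v) :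
    (pdsAux n v ω.reverse).1 = 1 ∧
      IsReducedW n (pds n v ω) ∧ exprProd n (pds n v ω) = v :=
  stmt2_general n v ω hbruhat
end

section
/- Let c be a fixed value and consider two-row tableaux with top row constant equal to c and bottom row a word w = (w_1,...,w_n). Define inv(w; c) to be the number of pairs i < j such that the triple (w_j, w_i, c) is 'counterclockwise', i.e., satisfies w_j < w_i ≤ c, or c < w_j < w_i, or w_i ≤ c < w_j. If b = (b_1,...,b_n) is the sorted order (all entries > c in weakly increasing order followed by all entries ≤ c in weakly increasing order), then inv(b; c) = 0, and for any rearrangement w of b, inv(w; c) equals the minimal number of adjacent transpositions needed to obtain w from b. -/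
/-- The triple `(a, b, c)` (configured with `b` above `c` in a column and `a` to the
right of `b`) is counterclockwise. -/
def ccw (a b c : ℕ) : Prop := (a < b ∧ b ≤ c) ∨ (c < a ∧ a < b) ∨ (b ≤ c ∧ c < a)

instance (a b c : ℕ) : Decidable (ccw a b c) := by unfold ccw; infer_instance

/-- `inv(w; c)`: the number of pairs `i < j` such that `(w j, w i, c)` is
counterclockwise. -/
def invc {n : ℕ} (c : ℕ) (w : Fin n → ℕ) : ℕ :=
  (Finset.univ.filter (fun p : Fin n × Fin n => p.1 < p.2 ∧ ccw (w p.2) (w p.1) c)).card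

/-- `b` is sorted with respect to `c`: all entries `> c` come first, weakly increasing,
followed by all entries `≤ c`, weakly increasing. -/
def SortedWrt (c : ℕ) {n : ℕ} (b : Fin n → ℕ) : Prop :=
  ∃ k : ℕ, k ≤ n ∧ (∀ i : Fin n, (i : ℕ) < k → c < b i) ∧
    (∀ i : Fin n, k ≤ (i : ℕ) → b i ≤ c) ∧
    (∀ i j : Fin n, i ≤ j → (j : ℕ) < k → b i ≤ b j) ∧
    (∀ i j : Fin n, i ≤ j → k ≤ (i : ℕ) → b i ≤ b j)

/-!
Send each value `v` to the key `(0, v)` if `v > c` and `(1, v)` if `v ≤ c`, ordered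
lexicographically. Then `(w j, w i, c)` is counterclockwise exactly when the keys of `w j` and
`w i` are out of order, so `inv(w; c)` is the ordinary inversion number of the key word, and `b`
sorted with respect to `c` means its key word is weakly increasing. For a weakly increasing word
`f`, every inversion of `f ∘ τ` is an inversion of `τ`, so `permLen τ` bounds `inv (f ∘ σ)` for
every `τ` with `f ∘ τ = f ∘ σ`; the bound is attained by the inverse of the stable sorting
permutation of `f ∘ σ`, whose inversions are exactly those of `f ∘ σ`.
-/

open Finset

def numInv {α : Type*} [LinearOrder α] {n : ℕ} (f : Fin n → α) : ℕ :=
  #{p : Fin n × Fin n | p.1 < p.2 ∧ f p.2 < f p.1}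

section Inversions

variable {α β : Type*} [LinearOrder α] [LinearOrder β] {n : ℕ}

theorem numInv_eq_zero_of_monotone {f : Fin n → α} (hf : Monotone f) : numInv f = 0 := by
  rw [numInv, card_eq_zero, filter_eq_empty_iff]
  rintro ⟨i, j⟩ - ⟨hij, hji⟩
  exact (hf hij.le).not_gt hji

theorem numInv_comp_le {g : α → β} (hg : Monotone g) (f : Fin n → α) :
    numInv (g ∘ f) ≤ numInv f :=
  card_le_card <| monotone_filter_right _ fun _ _ ⟨hij, hgf⟩ => ⟨hij, hg.reflect_lt hgf⟩

theorem sort_inv_apply_lt_iff (f : Fin n → α) {i j : Fin n} (hij : i < j) :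
    (Tuple.sort f)⁻¹ j < (Tuple.sort f)⁻¹ i ↔ f j < f i := by
  set ρ := Tuple.sort f
  obtain ⟨hmono, hstable⟩ := Tuple.eq_sort_iff.mp (rfl : ρ = Tuple.sort f)
  have hρ : ∀ k, f (ρ (ρ⁻¹ k)) = f k := fun k => by simp
  constructor
  · intro h
    refine lt_of_le_of_ne (hρ j ▸ hρ i ▸ hmono h.le) fun heq => hij.not_gt ?_
    -- a tie is impossible: `Tuple.sort` is stable, so equal entries keep their order
    simpa using hstable _ _ h (by simpa using heq)
  · intro h
    by_contra! h'
    exact h.not_ge (hρ j ▸ hρ i ▸ hmono h')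

theorem numInv_eq_permLen_inv_sort (f : Fin n → α) : numInv f = permLen (Tuple.sort f)⁻¹ :=
  congrArg card <| filter_congr fun _ _ =>
    and_congr_right fun hij => (sort_inv_apply_lt_iff f hij).symm

theorem numInv_comp_eq_sInf_permLen {f : Fin n → α} (hf : Monotone f) (σ : Equiv.Perm (Fin n)) :
    numInv (f ∘ σ) = sInf {m | ∃ τ : Equiv.Perm (Fin n), f ∘ τ = f ∘ σ ∧ permLen τ = m} := by
  set ρ := Tuple.sort (f ∘ σ)
  have hsorted : f ∘ σ ∘ ρ = f := by
    have := Tuple.comp_perm_comp_sort_eq_comp_sort (f := f) (σ := σ)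
    rwa [Tuple.sort_eq_refl_iff_monotone.mpr hf] at this
  have hρ : f ∘ ⇑ρ⁻¹ = f ∘ σ := funext fun x => by simpa using (congrFun hsorted (ρ⁻¹ x)).symm
  refine le_antisymm ?_ (Nat.sInf_le ⟨ρ⁻¹, hρ, (numInv_eq_permLen_inv_sort _).symm⟩)
  refine le_csInf ⟨_, σ, rfl, rfl⟩ ?_
  rintro _ ⟨τ, hτ, rfl⟩
  exact hτ ▸ numInv_comp_le hf τ

end Inversions

def ccwKey (c v : ℕ) : ℕ ×ₗ ℕ := toLex (if v ≤ c then 1 else 0, v)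

theorem ccw_iff_ccwKey_lt (a b c : ℕ) : ccw a b c ↔ ccwKey c a < ccwKey c b := by
  rw [ccw, ccwKey, ccwKey, Prod.Lex.toLex_lt_toLex]
  grind

theorem ccwKey_injective (c : ℕ) : Function.Injective (ccwKey c) :=
  fun _ _ h => congrArg Prod.snd (toLex.injective h)

theorem invc_eq_numInv (c : ℕ) {n : ℕ} (w : Fin n → ℕ) : invc c w = numInv (ccwKey c ∘ w) :=
  congrArg card <| filter_congr fun _ _ => and_congr_right fun _ => ccw_iff_ccwKey_lt _ _ _

theorem SortedWrt.monotone_ccwKey {c n : ℕ} {b : Fin n → ℕ} (hb : SortedWrt c b) :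
    Monotone (ccwKey c ∘ b) := by
  obtain ⟨k, -, hlarge, hsmall, hmono_large, hmono_small⟩ := hb
  intro i j hij
  rw [Function.comp_apply, Function.comp_apply, ← not_lt, ← ccw_iff_ccwKey_lt, ccw]
  have hij' : (i : ℕ) ≤ j := hij
  rcases lt_or_ge (j : ℕ) k with hj | hj
  · have := hlarge i (by omega); have := hmono_large i j hij hj
    omega
  rcases lt_or_ge (i : ℕ) k with hi | hi
  · have := hlarge i hi; have := hsmall j hj
    omega
  · have := hsmall j hj; have := hmono_small i j hij hi
    omega

/-- If `b` is the sorted order with respect to `c` then `inv(b; c) = 0`, and for any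
rearrangement `w = b ∘ σ` of `b`, `inv(w; c)` equals the minimal number of adjacent
transpositions needed to obtain `w` from `b` (the length of a shortest permutation
carrying `b` to `w`). -/
theorem stmt6 {n : ℕ} (c : ℕ) (b : Fin n → ℕ) (hb : SortedWrt c b) :
    invc c b = 0 ∧
    ∀ σ : Equiv.Perm (Fin n),
      invc c (b ∘ σ) =
        sInf {m : ℕ | ∃ τ : Equiv.Perm (Fin n), b ∘ τ = b ∘ σ ∧ permLen τ = m} := by
  have hmono := hb.monotone_ccwKey
  refine ⟨by rw [invc_eq_numInv, numInv_eq_zero_of_monotone hmono], fun σ => ?_⟩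
  rw [invc_eq_numInv, ← Function.comp_assoc, numInv_comp_eq_sInf_permLen hmono]
  simp only [Function.comp_assoc, (ccwKey_injective c).comp_left.eq_iff]
end

section
/- Let μ be a partition. Then PR1(μ) := Π_{s ∈ dg(μ')} (1 - q^{arm(s)} t^{leg(s)+1}) equals PR2(inc(μ)) := Π_{i≥1} (t;t)_{m_i} · Π_{s ∈ dg(inc(μ)), s not in the bottom row} (1 - q^{leg(s)+1} t^{arm(s)+1}), where m_i is the number of parts of μ equal to i and (t;t)_k = (1-t)(1-t^2)···(1-t^k). -/
/-- The arm of the cell `(i, r)` in the diagram of a weak composition `α` (columns of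
heights `α i`, rows numbered from `1` at the bottom): the number of cells to the right
of `(i,r)` in row `r` lying in columns of height at most `α i`, plus the number of
cells to the left of `(i, r-1)` in row `r-1` lying in columns of height less than
`α i`. -/
def armC {n : ℕ} (α : Fin n → ℕ) (i : Fin n) (r : ℕ) : ℕ :=
  (Finset.univ.filter (fun j : Fin n => i < j ∧ r ≤ α j ∧ α j ≤ α i)).card +
  (Finset.univ.filter (fun j : Fin n => j < i ∧ 2 ≤ r ∧ r - 1 ≤ α j ∧ α j < α i)).card

/-- The leg of the cell `(i, r)`: the number of cells above it in its column. -/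
def legC {n : ℕ} (α : Fin n → ℕ) (i : Fin n) (r : ℕ) : ℕ := α i - r

/-- `(t;t)_k = (1-t)(1-t²)⋯(1-t^k)`. -/
def ttpoch {R : Type*} [CommRing R] (t : R) (k : ℕ) : R :=
  ∏ i ∈ Finset.range k, (1 - t ^ (i + 1))

/-! For antitone `μ` the arm of the cell `(i, r)` is `e i + #{j | r ≤ μ j < μ i}`, where
`e i` counts the parts equal to `μ i` to the right of column `i`; for the increasing
rearrangement the arm of a cell `(i, r)` with `r ≥ 2` is `e i + #{j | r - 1 ≤ α j < α i}`.
So the top cells of `μ` contribute `1 - t ^ (e i + 1)`, which over a block of `m` equal parts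
is `(t;t)_m`, and the factor of the cell `(i, r)` of `μ` below the top depends only on
`(μ i, e i, r)` and equals the factor of the cell `(i', r + 1)` of the rearrangement with
`(α i', e i') = (μ i, e i)`. Products `∏ i, g (α i) (e i)` depend only on the multiset of
parts, since `e` enumerates each block of equal parts by `0, …, m - 1`. -/

open Finset

section CountAfter

variable {ι β M : Type*} [LinearOrder ι] [CommMonoid M]

lemma Finset.prod_card_filter_gt_eq_prod_range (s : Finset ι) (h : ℕ → M) :
    ∏ x ∈ s, h #{y ∈ s | x < y} = ∏ k ∈ range #s, h k := by
  set φ : ι → ℕ := fun x => #{y ∈ s | x < y}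
  have hφ : StrictAntiOn φ s := fun x _ x' hx' hlt =>
    card_lt_card <| (ssubset_iff_of_subset (monotone_filter_right s fun _ _ => hlt.trans)).mpr
      ⟨x', mem_filter.mpr ⟨hx', hlt⟩, fun h => lt_irrefl x' (mem_filter.mp h).2⟩
  have himage : s.image φ = range #s := by
    refine eq_of_subset_of_card_le (fun k hk => ?_)
      (by rw [card_image_of_injOn hφ.injOn, card_range])
    obtain ⟨x, hx, rfl⟩ := mem_image.mp hk
    exact mem_range.mpr (card_lt_card (filter_ssubset.mpr ⟨x, hx, lt_irrefl x⟩))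
  rw [← himage, prod_image hφ.injOn]

variable [Fintype ι] [DecidableEq β]

def countEqAfter (α : ι → β) (i : ι) : ℕ := #{j | i < j ∧ α j = α i}

lemma prod_countEqAfter (α : ι → β) (g : β → ℕ → M) :
    ∏ i, g (α i) (countEqAfter α i) =
      ∏ v ∈ univ.image α, ∏ k ∈ range #{j | α j = v}, g v k := by
  rw [← prod_fiberwise_of_maps_to (fun i _ => mem_image_of_mem α (mem_univ i))]
  refine prod_congr rfl fun v _ => ?_
  rw [← prod_card_filter_gt_eq_prod_range]
  refine prod_congr rfl fun i hi => ?_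
  rw [(mem_filter.mp hi).2, countEqAfter, filter_filter]
  congr 3
  ext j
  rw [(mem_filter.mp hi).2]
  tauto

lemma prod_countEqAfter_comp_equiv (α : ι → β) (σ : ι ≃ ι) (g : β → ℕ → M) :
    ∏ i, g ((α ∘ σ) i) (countEqAfter (α ∘ σ) i) =
      ∏ i, g (α i) (countEqAfter α i) := by
  have himage : univ.image (α ∘ σ) = univ.image α := by
    ext v
    simp only [mem_image, mem_univ, true_and, Function.comp_apply]
    exact (σ.surjective.exists (p := fun a => α a = v)).symm
  have hfiber (v : β) : #{j | (α ∘ σ) j = v} = #{j | α j = v} := card_equiv σ (by simp)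
  simp only [prod_countEqAfter, himage, hfiber]

lemma prod_ite_pos_countEqAfter {R : Type*} [CommRing R] (t : R) (α : ι → ℕ) :
    ∏ i, (if 0 < α i then 1 - t ^ (countEqAfter α i + 1) else 1) =
      ∏ v ∈ (univ.image α).filter (0 < ·), ttpoch t #{j | α j = v} := by
  rw [prod_countEqAfter α fun v e => if 0 < v then 1 - t ^ (e + 1) else 1, prod_filter]
  simp only [prod_ite_irrel, prod_const_one, ttpoch]

end CountAfter

def countIco {ι : Type*} [Fintype ι] (α : ι → ℕ) (a b : ℕ) : ℕ :=
  #{j | a ≤ α j ∧ α j < b}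

lemma countIco_comp_equiv {ι : Type*} [Fintype ι] (α : ι → ℕ) (σ : ι ≃ ι) (a b : ℕ) :
    countIco (α ∘ σ) a b = countIco α a b :=
  card_equiv σ (by simp)

lemma prod_Icc_one_eq_ite_mul_prod_Icc_two {M : Type*} [CommMonoid M] (v : ℕ) (h : ℕ → M) :
    ∏ r ∈ Icc 1 v, h r = (if 0 < v then h v else 1) * ∏ r ∈ Icc 2 v, h (r - 1) := by
  cases v with
  | zero => simp
  | succ v =>
    have hshift : Icc 2 (v + 1) = (Icc 1 v).map (addRightEmbedding 1) := by simp
    rw [prod_Icc_succ_top (by omega), hshift, prod_map, if_pos v.succ_pos, mul_comm]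
    simp

section Cells

variable {n : ℕ} {i : Fin n} {r : ℕ}

lemma armC_of_antitone {μ : Fin n → ℕ} (hμ : Antitone μ) (hr : r ≤ μ i) :
    armC μ i r = countEqAfter μ i + countIco μ r (μ i) := by
  have hleft : #{j | j < i ∧ 2 ≤ r ∧ r - 1 ≤ μ j ∧ μ j < μ i} = 0 :=
    card_eq_zero.mpr <| filter_false_of_mem fun j _ h => (hμ h.1.le).not_gt h.2.2.2
  rw [armC, hleft, add_zero, countEqAfter, countIco, ← card_union_of_disjoint]
  · congr 1
    ext j
    have : μ j < μ i → i < j := hμ.reflect_lt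
    simp only [mem_filter, mem_univ, true_and, mem_union]
    omega
  · exact disjoint_filter.mpr fun _ _ _ _ => by omega

lemma armC_of_monotone {α : Fin n → ℕ} (hα : Monotone α) (h2 : 2 ≤ r) (hr : r ≤ α i) :
    armC α i r = countEqAfter α i + countIco α (r - 1) (α i) := by
  rw [armC, countEqAfter, countIco]
  congr 1 <;> congr 1 <;> ext j
  · have : i < j → α i ≤ α j := fun h => hα h.le
    simp only [mem_filter, mem_univ, true_and]
    omega
  · have : α j < α i → j < i := hα.reflect_lt
    simp only [mem_filter, mem_univ, true_and]
    omega

variable {R : Type*} [CommRing R] (q t : R)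

lemma prod_cells_of_antitone {μ : Fin n → ℕ} (hμ : Antitone μ) :
    ∏ i, ∏ r ∈ Icc 1 (μ i), (1 - q ^ legC μ i r * t ^ (armC μ i r + 1)) =
      ∏ i, (if 0 < μ i then 1 - t ^ (countEqAfter μ i + 1) else 1) *
        ∏ r ∈ Icc 2 (μ i),
          (1 - q ^ (μ i - r + 1) * t ^ (countEqAfter μ i + countIco μ (r - 1) (μ i) + 1)) := by
  refine prod_congr rfl fun i _ => ?_
  rw [prod_congr rfl fun r hr => by rw [legC, armC_of_antitone hμ (mem_Icc.mp hr).2],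
    prod_Icc_one_eq_ite_mul_prod_Icc_two]
  have htop : countIco μ (μ i) (μ i) = 0 :=
    card_eq_zero.mpr <| filter_false_of_mem fun _ _ h => by omega
  congr 1
  · simp [htop]
  · refine prod_congr rfl fun r hr => ?_
    have := mem_Icc.mp hr
    rw [show μ i - (r - 1) = μ i - r + 1 by omega]

lemma prod_upper_cells_of_monotone {α : Fin n → ℕ} (hα : Monotone α) :
    ∏ i, ∏ r ∈ Icc 2 (α i), (1 - q ^ (legC α i r + 1) * t ^ (armC α i r + 1)) =
      ∏ i, ∏ r ∈ Icc 2 (α i),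
        (1 - q ^ (α i - r + 1) * t ^ (countEqAfter α i + countIco α (r - 1) (α i) + 1)) :=
  prod_congr rfl fun i _ => prod_congr rfl fun r hr => by
    rw [legC, armC_of_monotone hα (mem_Icc.mp hr).1 (mem_Icc.mp hr).2]

end Cells

/-- For a partition `μ` (weakly decreasing), `PR1(μ) = ∏_{s ∈ dg(μ)} (1 - q^{leg s}
t^{arm s + 1})` equals `PR2(inc μ) = ∏_{i ≥ 1} (t;t)_{m_i} · ∏_{s ∈ dg(inc μ), s not in
the bottom row} (1 - q^{leg s + 1} t^{arm s + 1})`, where `m_i` is the number of parts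
of `μ` equal to `i` and `inc μ` sorts the parts into weakly increasing order. -/
theorem stmt10 {R : Type*} [CommRing R] (q t : R) (n : ℕ) (μ : Fin n → ℕ)
    (hμ : Antitone μ) :
    (∏ i : Fin n, ∏ r ∈ Finset.Icc 1 (μ i),
        (1 - q ^ legC μ i r * t ^ (armC μ i r + 1))) =
    (∏ v ∈ (Finset.image μ Finset.univ).filter (fun v => 0 < v),
        ttpoch t ((Finset.univ.filter (fun j : Fin n => μ j = v)).card)) *
      ∏ i : Fin n, ∏ r ∈ Finset.Icc 2 ((μ ∘ Fin.rev) i),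
        (1 - q ^ (legC (μ ∘ Fin.rev) i r + 1) * t ^ (armC (μ ∘ Fin.rev) i r + 1)) := by
  rw [prod_cells_of_antitone q t hμ, prod_mul_distrib, prod_ite_pos_countEqAfter,
    prod_upper_cells_of_monotone q t (hμ.comp Fin.rev_strictAnti.antitone)]
  congr 1
  have hcount : countIco (μ ∘ Fin.rev) = countIco μ :=
    funext₂ (countIco_comp_equiv μ Fin.revPerm)
  simp only [hcount]
  exact (prod_countEqAfter_comp_equiv μ Fin.revPerm fun v e => ∏ r ∈ Icc 2 v,
    (1 - q ^ (v - r + 1) * t ^ (e + countIco μ (r - 1) v + 1))).symm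
end

section
/- Let σ be a sorted rectangular tableau whose top row has block decomposition B^{(1)},...,B^{(ℓ)}. Then perm_t(σ) = perm_t(σ restricted to its bottom m−1 rows) · Π_{i=1}^ℓ perm_t(B^{(i)}), where perm_t of a rectangular tableau with u_1,...,u_j multiplicities of identical columns is the t-multinomial binom(n; u_1,...,u_j)_t, and perm_t(B) of a block with entry multiplicities b_1,...,b_k is binom(|B|; b_1,...,b_k)_t. -/
/-!
A column is determined by its bottom `m` entries together with its top entry, so the
multiplicities of identical columns are the multiplicities `b_{v,w}` of the pairs
(block `v`, top entry `w`). With `m_v = ∑_w b_{v,w}` the size of block `v`, the identity is the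
telescoping `[n]!/∏_v [m_v]! · ∏_v ([m_v]!/∏_w [b_{v,w}]!) = [n]!/∏_{v,w} [b_{v,w}]!`.
-/

/-- The `t`-analogue of `n!`: `[n]_t! = ∏_{i=1}^{n} (1 + t + ⋯ + t^{i-1})`,
at the generic parameter `t = X` in the field `ℚ(t)` of rational functions. -/
noncomputable def tfactX (n : ℕ) : RatFunc ℚ :=
  ∏ i ∈ Finset.range n, ∑ j ∈ Finset.range (i + 1), (RatFunc.X : RatFunc ℚ) ^ j

/-- The Gaussian (t-)multinomial coefficient attached to a function `f` on `Fin n`: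
`[n]_t! / ∏_v [m_v]_t!` where `m_v` are the sizes of the fibers of `f`. -/
noncomputable def permT {n : ℕ} {β : Type*} [DecidableEq β] (f : Fin n → β) : RatFunc ℚ :=
  tfactX n /
    ∏ v ∈ Finset.image f Finset.univ,
      tfactX ((Finset.univ.filter (fun j => f j = v)).card)

/-- The column order `A ◁ B` on columns of height `m+1` (entries listed bottom to top):
either `A 0 < B 0`, or the columns agree strictly below some row `r ≥ 1` and the cells
containing `B r`, `A r`, `A (r-1)` do not form a counterclockwise triple. -/
def colLhd {m : ℕ} (A B : Fin (m + 1) → ℕ) : Prop :=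
  A 0 < B 0 ∨
    ∃ r r' : Fin (m + 1), (r' : ℕ) + 1 = (r : ℕ) ∧
      (∀ i : Fin (m + 1), (i : ℕ) < (r : ℕ) → A i = B i) ∧
      ¬ ccw (B r) (A r) (A r')
open Finset

lemma tfactX_ne_zero (n : ℕ) : tfactX n ≠ 0 := by
  refine prod_ne_zero_iff.2 fun i _ => ?_
  have hpoly : ∑ j ∈ range (i + 1), (RatFunc.X : RatFunc ℚ) ^ j =
      algebraMap (Polynomial ℚ) (RatFunc ℚ) (∑ j ∈ range (i + 1), Polynomial.X ^ j) := by
    simp [map_sum, RatFunc.algebraMap_X]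
  rw [hpoly]
  refine RatFunc.algebraMap_ne_zero fun h => ?_
  exact Nat.cast_add_one_ne_zero i (by simpa using congrArg (Polynomial.eval (1 : ℚ)) h)

lemma Finset.prod_image_prodMk {ι α β M : Type*} [CommMonoid M] [DecidableEq α] [DecidableEq β]
    (s : Finset ι) (f : ι → α) (g : ι → β) (φ : α × β → M) :
    ∏ p ∈ s.image (fun i => (f i, g i)), φ p =
      ∏ a ∈ s.image f, ∏ b ∈ (s.filter (f · = a)).image g, φ (a, b) := by
  rw [← prod_fiberwise_of_maps_to (t := s.image f) (g := Prod.fst)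
    (by simp only [mem_image]; rintro _ ⟨i, hi, rfl⟩; exact ⟨i, hi, rfl⟩)]
  refine prod_congr rfl fun a _ => ?_
  have hfiber : (s.image fun i => (f i, g i)).filter (·.1 = a) =
      ((s.filter (f · = a)).image g).image (Prod.mk a) := by
    ext ⟨a', b⟩
    simp only [mem_filter, mem_image, Prod.mk.injEq]
    constructor
    · rintro ⟨⟨i, hi, rfl, rfl⟩, rfl⟩
      exact ⟨g i, ⟨i, ⟨hi, rfl⟩, rfl⟩, rfl, rfl⟩
    · rintro ⟨_, ⟨i, ⟨hi, rfl⟩, rfl⟩, rfl, rfl⟩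
      exact ⟨⟨i, hi, rfl, rfl⟩, rfl⟩
  rw [hfiber, prod_image (Prod.mk_right_injective a).injOn]

lemma permT_comp_injective {n : ℕ} {β γ : Type*} [DecidableEq β] [DecidableEq γ] {e : β → γ}
    (he : Function.Injective e) (f : Fin n → β) : permT (e ∘ f) = permT f := by
  unfold permT
  rw [← image_image, prod_image he.injOn]
  simp only [Function.comp_apply, he.eq_iff]

lemma permT_prodMk {n : ℕ} {α β : Type*} [DecidableEq α] [DecidableEq β]
    (f : Fin n → α) (g : Fin n → β) :
    permT (fun j => (f j, g j)) = permT f * ∏ a ∈ univ.image f,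
      (tfactX #{j | f j = a} /
        ∏ b ∈ (univ.filter (f · = a)).image g, tfactX #{j | f j = a ∧ g j = b}) := by
  unfold permT
  rw [prod_image_prodMk, prod_div_distrib]
  simp only [Prod.mk.injEq]
  exact (div_mul_div_cancel₀ (prod_ne_zero_iff.2 fun _ _ => tfactX_ne_zero _)).symm

/-- Row `0` is the bottom row, and the blocks of the top row are modelled as the fibers of the
map sending a column to its bottom `m` entries. -/
theorem stmt11_general (m n : ℕ) (σ : Fin (m + 1) → Fin n → ℕ) :
    permT (fun j : Fin n => fun i : Fin (m + 1) => σ i j) =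
      permT (fun j : Fin n => fun i : Fin m => σ i.castSucc j) *
        ∏ v ∈ Finset.image (fun j : Fin n => fun i : Fin m => σ i.castSucc j) Finset.univ,
          (tfactX ((Finset.univ.filter
              (fun j : Fin n => (fun i : Fin m => σ i.castSucc j) = v)).card) /
            ∏ w ∈ Finset.image (fun j : Fin n => σ (Fin.last m) j)
                (Finset.univ.filter (fun j : Fin n => (fun i : Fin m => σ i.castSucc j) = v)),
              tfactX ((Finset.univ.filter (fun j : Fin n =>
                (fun i : Fin m => σ i.castSucc j) = v ∧ σ (Fin.last m) j = w)).card)) := by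
  have hcol : (fun j : Fin n => fun i : Fin (m + 1) => σ i j) =
      (fun p : (Fin m → ℕ) × ℕ => Fin.snoc p.1 p.2) ∘
        fun j => (fun i : Fin m => σ i.castSucc j, σ (Fin.last m) j) :=
    funext fun j => (Fin.snoc_init_self _).symm
  have hsnoc :
      Function.Injective fun p : (Fin m → ℕ) × ℕ => (Fin.snoc p.1 p.2 : Fin (m + 1) → ℕ) :=
    fun _ _ h => Prod.ext_iff.2 (Fin.snoc_injective2 h)
  rw [hcol, permT_comp_injective hsnoc, permT_prodMk]

/-- Let `σ` be a sorted rectangular tableau with `m+1` rows and `n` columns (row `0` at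
the bottom, row `m` on top).  Writing `col j` for its columns, `bot j` for the columns of
its bottom `m` rows, and `top j` for the top-row entries, the blocks of the top row are
the fibers of `bot`, and
`perm_t(σ) = perm_t(σ|_{bottom m rows}) · ∏_{blocks B} perm_t(B)`,
where `perm_t(B)` is the t-multinomial of the multiplicities of the distinct top-row
entries within the block `B`. -/
theorem stmt11 (m n : ℕ) (σ : Fin (m + 1) → Fin n → ℕ)
    (hsorted : ∀ j₁ j₂ : Fin n, j₁ < j₂ →
      (fun i => σ i j₁) = (fun i => σ i j₂) ∨ colLhd (fun i => σ i j₁) (fun i => σ i j₂)) :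
    permT (fun j : Fin n => fun i : Fin (m + 1) => σ i j) =
      permT (fun j : Fin n => fun i : Fin m => σ i.castSucc j) *
        ∏ v ∈ Finset.image (fun j : Fin n => fun i : Fin m => σ i.castSucc j) Finset.univ,
          (tfactX ((Finset.univ.filter
              (fun j : Fin n => (fun i : Fin m => σ i.castSucc j) = v)).card) /
            ∏ w ∈ Finset.image (fun j : Fin n => σ (Fin.last m) j)
                (Finset.univ.filter (fun j : Fin n => (fun i : Fin m => σ i.castSucc j) = v)),
              tfactX ((Finset.univ.filter (fun j : Fin n =>
                (fun i : Fin m => σ i.castSucc j) = v ∧ σ (Fin.last m) j = w)).card)) :=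
  stmt11_general m n σ
end

section
/- Let σ be a two-row tableau with constant top row c and bottom row b sorted (inv = 0). For each rearrangement w of b, let T_w denote the composition of adjacent-swap operators along a shortest factorization carrying b to w. Then Σ_w t^{inv(T_w(σ))} = binom(n; m_1,...,m_r)_t, where the sum is over distinct rearrangements w of b and m_1,...,m_r are the multiplicities of distinct entries in b; equivalently Σ_w t^{inv(w; c)} = binom(n; m_1,...,m_r)_t where inv(w; c) counts counterclockwise triples with apex c. -/
/-- The `t`-analogue of `n!`: `[n]_t! = ∏_{i=1}^{n} (1 + t + ⋯ + t^{i-1})`. -/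
def tfact {R : Type*} [CommRing R] (t : R) (n : ℕ) : R :=
  ∏ i ∈ Finset.range n, ∑ j ∈ Finset.range (i + 1), t ^ j

/-! ### Auxiliary definitions -/

/-- The number of indices where `w` takes the value `v`. -/
def cnt {n : ℕ} (w : Fin n → ℕ) (v : ℕ) : ℕ :=
  (Finset.univ.filter (fun i => w i = v)).card

/-- The (standard) number of inversions of a tuple. -/
def myinv {n : ℕ} (w : Fin n → ℕ) : ℕ :=
  (Finset.univ.filter (fun p : Fin n × Fin n => p.1 < p.2 ∧ w p.2 < w p.1)).card

lemma tfact_zero {R : Type*} [CommRing R] (t : R) : tfact t 0 = 1 := by simp [tfact]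

lemma tfact_succ {R : Type*} [CommRing R] (t : R) (n : ℕ) :
    tfact t (n + 1) = tfact t n * ∑ j ∈ Finset.range (n + 1), t ^ j :=
  Finset.prod_range_succ _ _

lemma card_filter_comp {n : ℕ} (a : Fin n → ℕ) (σ : Equiv.Perm (Fin n)) (p : ℕ → Prop)
    [DecidablePred p] :
    (Finset.univ.filter (fun i => p (a (σ i)))).card
      = (Finset.univ.filter (fun i => p (a i))).card := by
  simp only [Finset.card_filter]
  exact Equiv.sum_comp σ (fun i => if p (a i) then 1 else 0)

lemma cnt_succAbove {n : ℕ} (a : Fin (n + 1) → ℕ) (j : Fin (n + 1)) (u : ℕ) :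
    cnt a u = cnt (a ∘ j.succAbove) u + (if a j = u then 1 else 0) := by
  simp only [cnt, Finset.card_filter, Function.comp]
  rw [Fin.sum_univ_succAbove (fun i => if a i = u then 1 else 0) j, add_comm]

lemma card_filter_succAbove {n : ℕ} (w : Fin (n + 1) → ℕ) (j : Fin (n + 1)) (p : ℕ → Prop)
    [DecidablePred p] :
    (Finset.univ.filter (fun i => p (w i))).card
      = (if p (w j) then 1 else 0)
        + (Finset.univ.filter (fun i : Fin n => p (w (j.succAbove i)))).card := by
  simp only [Finset.card_filter]
  rw [Fin.sum_univ_succAbove (fun i => if p (w i) then 1 else 0) j]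

/-- A tuple is a rearrangement of `a` iff all multiplicities agree. -/
lemma mem_rearr_iff {n : ℕ} (a w : Fin n → ℕ) :
    w ∈ Finset.image (fun σ : Equiv.Perm (Fin n) => a ∘ σ) Finset.univ ↔
      ∀ v, cnt w v = cnt a v := by
  constructor
  · rintro hw v
    obtain ⟨σ, -, rfl⟩ := Finset.mem_image.mp hw
    exact card_filter_comp a σ (· = v)
  · intro h
    have e : ∀ v : ℕ, { i : Fin n // w i = v } ≃ { i : Fin n // a i = v } := fun v =>
      Fintype.equivOfCardEq (by rw [Fintype.card_subtype, Fintype.card_subtype]; exact h v)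
    refine Finset.mem_image.mpr ⟨Equiv.ofFiberEquiv e, Finset.mem_univ _, ?_⟩
    funext i
    exact Equiv.ofFiberEquiv_map e i

lemma myinv_castSucc {n : ℕ} (w : Fin (n + 1) → ℕ) :
    myinv w = myinv (w ∘ Fin.castSucc)
      + (Finset.univ.filter (fun i : Fin n => w (Fin.last n) < w (Fin.castSucc i))).card := by
  simp only [myinv, Finset.card_filter, Fintype.sum_prod_type, Function.comp]
  rw [Fin.sum_univ_castSucc (f := fun i : Fin (n + 1) =>
      ∑ j : Fin (n + 1), if i < j ∧ w j < w i then 1 else 0)]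
  have h1 : (∑ j : Fin (n + 1), if Fin.last n < j ∧ w j < w (Fin.last n) then 1 else 0) = 0 :=
    Finset.sum_eq_zero fun j _ => by
      rw [if_neg]; rintro ⟨h, -⟩; exact absurd h (not_lt.mpr (Fin.le_last j))
  rw [h1, add_zero]
  have h2 : ∀ i : Fin n,
      (∑ j : Fin (n + 1), if Fin.castSucc i < j ∧ w j < w (Fin.castSucc i) then 1 else 0)
      = (∑ j : Fin n, if i < j ∧ w (Fin.castSucc j) < w (Fin.castSucc i) then 1 else 0)
        + (if w (Fin.last n) < w (Fin.castSucc i) then 1 else 0) := by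
    intro i
    rw [Fin.sum_univ_castSucc (f := fun j : Fin (n + 1) =>
        if Fin.castSucc i < j ∧ w j < w (Fin.castSucc i) then 1 else 0)]
    simp only [Fin.castSucc_lt_castSucc_iff, Fin.castSucc_lt_last, true_and]
  rw [Finset.sum_congr rfl fun i _ => h2 i, Finset.sum_add_distrib]

lemma snoc_cast_self {n : ℕ} (w : Fin (n + 1) → ℕ) :
    Fin.snoc (w ∘ Fin.castSucc) (w (Fin.last n)) = w := by
  funext i
  induction i using Fin.lastCases with
  | last => simp
  | cast j => simp

/-- The core identity, for an arbitrary tuple `a`. -/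
lemma core {R : Type*} [CommRing R] (t : R) :
    ∀ (n : ℕ) (a : Fin n → ℕ),
    (∑ w ∈ Finset.image (fun σ : Equiv.Perm (Fin n) => a ∘ σ) Finset.univ, t ^ myinv w) *
      ∏ v ∈ Finset.image a Finset.univ, tfact t (cnt a v) = tfact t n := by
  intro n
  induction n with
  | zero =>
      intro a
      simp [myinv, tfact, Finset.univ_unique]
  | succ n ih =>
      intro a
      set W := Finset.image (fun σ : Equiv.Perm (Fin (n + 1)) => a ∘ σ) Finset.univ with hW
      have hmaps : ∀ w ∈ W, w (Fin.last n) ∈ Finset.image a Finset.univ := by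
        intro w hw
        obtain ⟨σ, -, rfl⟩ := Finset.mem_image.mp hw
        exact Finset.mem_image_of_mem a (Finset.mem_univ _)
      rw [← Finset.sum_fiberwise_of_maps_to hmaps (fun w => t ^ myinv w), Finset.sum_mul]
      have key : ∀ v ∈ Finset.image a Finset.univ,
          (∑ w ∈ W.filter (fun w => w (Fin.last n) = v), t ^ myinv w) *
            ∏ u ∈ Finset.image a Finset.univ, tfact t (cnt a u)
          = (t ^ (Finset.univ.filter (fun i => v < a i)).card
              * ∑ j ∈ Finset.range (cnt a v), t ^ j) * tfact t n := by
        intro v hv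
        obtain ⟨iv, -, hiv⟩ := Finset.mem_image.mp hv
        set av : Fin n → ℕ := a ∘ iv.succAbove with hav
        set gv : ℕ := (Finset.univ.filter (fun i => v < a i)).card with hgv
        have hcnt_av : ∀ u, cnt a u = cnt av u + (if v = u then 1 else 0) := by
          intro u
          have h := cnt_succAbove a iv u
          rwa [hiv] at h
        set Wv := Finset.image (fun σ : Equiv.Perm (Fin n) => av ∘ σ) Finset.univ with hWv
        -- step 1 : the sum over the fiber
        have hsum2 : (∑ w ∈ W.filter (fun w => w (Fin.last n) = v), t ^ myinv w)
            = ∑ w' ∈ Wv, t ^ (gv + myinv w') := by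
          apply Finset.sum_bij' (fun w _ => w ∘ Fin.castSucc)
            (fun w' _ => Fin.snoc w' v)
          · -- maps to
            intro w hw
            obtain ⟨hwW, hwlast⟩ := Finset.mem_filter.mp hw
            have hw_cnt := (mem_rearr_iff a w).mp hwW
            refine (mem_rearr_iff av _).mpr fun u => ?_
            have h1 : cnt w u = cnt (w ∘ Fin.castSucc) u + (if v = u then 1 else 0) := by
              have h := cnt_succAbove w (Fin.last n) u
              rwa [Fin.succAbove_last, hwlast] at h
            have h2 := hcnt_av u
            have h3 := hw_cnt u
            omega
          · -- reverse maps to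
            intro w' hw'
            have hw'_cnt := (mem_rearr_iff av w').mp hw'
            have hcs : (Fin.snoc w' v : Fin (n + 1) → ℕ) ∘ Fin.castSucc = w' := by
              funext i; simp
            have hlast : (Fin.snoc w' v : Fin (n + 1) → ℕ) (Fin.last n) = v := by simp
            refine Finset.mem_filter.mpr ⟨(mem_rearr_iff a _).mpr fun u => ?_, hlast⟩
            have h1 : cnt (Fin.snoc w' v : Fin (n + 1) → ℕ) u
                = cnt w' u + (if v = u then 1 else 0) := by
              have h := cnt_succAbove (Fin.snoc w' v : Fin (n + 1) → ℕ) (Fin.last n) u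
              rwa [Fin.succAbove_last, hcs, hlast] at h
            have h2 := hcnt_av u
            have h3 := hw'_cnt u
            omega
          · -- left inverse
            intro w hw
            obtain ⟨-, hwlast⟩ := Finset.mem_filter.mp hw
            rw [← hwlast]
            exact snoc_cast_self w
          · -- right inverse
            intro w' hw'
            funext i; simp
          · -- values
            intro w hw
            obtain ⟨hwW, hwlast⟩ := Finset.mem_filter.mp hw
            have hcard : (Finset.univ.filter
                (fun i : Fin n => w (Fin.last n) < w (Fin.castSucc i))).card = gv := by
              obtain ⟨σ, -, rfl⟩ := Finset.mem_image.mp hwW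
              have h := card_filter_succAbove (a ∘ σ) (Fin.last n) (fun x => v < x)
              rw [Fin.succAbove_last] at h
              have h2 : ((a ∘ σ) (Fin.last n) = v) := hwlast
              rw [h2] at h ⊢
              simp only [if_neg (lt_irrefl v), zero_add] at h
              rw [← h, hgv]
              exact card_filter_comp a σ (fun x => v < x)
            rw [hwlast] at hcard
            rw [myinv_castSucc w, hwlast, hcard, add_comm]
        rw [hsum2]
        -- step 2 : the product
        have hsub : Finset.image av Finset.univ ⊆ Finset.image a Finset.univ := by
          intro u hu
          obtain ⟨i, -, rfl⟩ := Finset.mem_image.mp hu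
          exact Finset.mem_image_of_mem a (Finset.mem_univ _)
        have hP : (∏ u ∈ Finset.image a Finset.univ, tfact t (cnt a u))
            = (∑ j ∈ Finset.range (cnt a v), t ^ j)
              * ∏ u ∈ Finset.image av Finset.univ, tfact t (cnt av u) := by
          have hext : (∏ u ∈ Finset.image av Finset.univ, tfact t (cnt av u))
              = ∏ u ∈ Finset.image a Finset.univ, tfact t (cnt av u) := by
            apply Finset.prod_subset hsub
            intro u hu hnot
            have hzero : cnt av u = 0 := by
              rw [cnt, Finset.card_eq_zero, Finset.filter_eq_empty_iff]
              intro i _ hi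
              exact hnot (hi ▸ Finset.mem_image_of_mem av (Finset.mem_univ i))
            rw [hzero, tfact_zero]
          rw [hext, ← Finset.mul_prod_erase _ _ hv, ← Finset.mul_prod_erase _ _ hv]
          have herase : (∏ u ∈ (Finset.image a Finset.univ).erase v, tfact t (cnt a u))
              = ∏ u ∈ (Finset.image a Finset.univ).erase v, tfact t (cnt av u) := by
            apply Finset.prod_congr rfl
            intro u hu
            have hne : v ≠ u := fun h => (Finset.ne_of_mem_erase hu) h.symm
            have h := hcnt_av u
            rw [if_neg hne, add_zero] at h
            rw [h]
          rw [herase]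
          have hv1 : cnt a v = cnt av v + 1 := by
            have h := hcnt_av v
            rwa [if_pos rfl] at h
          rw [hv1, tfact_succ]
          ring
        rw [hP]
        -- step 3 : assemble using the induction hypothesis
        have hihv := ih av
        calc (∑ w' ∈ Wv, t ^ (gv + myinv w')) *
              ((∑ j ∈ Finset.range (cnt a v), t ^ j)
                * ∏ u ∈ Finset.image av Finset.univ, tfact t (cnt av u))
            = (t ^ gv * ∑ j ∈ Finset.range (cnt a v), t ^ j)
              * ((∑ w' ∈ Wv, t ^ myinv w')
                * ∏ u ∈ Finset.image av Finset.univ, tfact t (cnt av u)) := by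
              simp only [pow_add, ← Finset.mul_sum]
              ring
          _ = (t ^ gv * ∑ j ∈ Finset.range (cnt a v), t ^ j) * tfact t n := by rw [hihv]
      rw [Finset.sum_congr rfl key, ← Finset.sum_mul]
      -- step 4 : the telescoping identity
      have htel : (∑ v ∈ Finset.image a Finset.univ,
          t ^ (Finset.univ.filter (fun i => v < a i)).card
            * ∑ j ∈ Finset.range (cnt a v), t ^ j)
          = ∑ j ∈ Finset.range (n + 1), t ^ j := by
        set G : ℕ → ℕ := fun u => (Finset.univ.filter (fun i => u ≤ a i)).card with hG
        set F : ℕ → R := fun u => ∑ j ∈ Finset.range (G u), t ^ j with hF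
        have hGrec : ∀ u, G u = G (u + 1) + cnt a u := by
          intro u
          simp only [hG, cnt, Finset.card_filter, ← Finset.sum_add_distrib]
          apply Finset.sum_congr rfl
          intro i _
          split_ifs <;> omega
        have hglt : ∀ v : ℕ, (Finset.univ.filter (fun i => v < a i)).card = G (v + 1) := by
          intro v
          simp only [hG]
          simp only [Nat.lt_iff_add_one_le]
        have hterm : ∀ v : ℕ, t ^ G (v + 1) * (∑ j ∈ Finset.range (cnt a v), t ^ j)
            = F v - F (v + 1) := by
          intro v
          simp only [hF]
          rw [hGrec v, Finset.sum_range_add, add_sub_cancel_left]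
          simp only [pow_add]
          rw [Finset.mul_sum]
        set V : ℕ := Finset.univ.sup a + 1 with hV
        have hsubset : Finset.image a Finset.univ ⊆ Finset.range V := by
          intro v hv
          obtain ⟨i, -, rfl⟩ := Finset.mem_image.mp hv
          exact Finset.mem_range.mpr (Nat.lt_succ_of_le (Finset.le_sup (Finset.mem_univ i)))
        have hzero : ∀ v ∈ Finset.range V, v ∉ Finset.image a Finset.univ →
            t ^ (Finset.univ.filter (fun i => v < a i)).card
              * ∑ j ∈ Finset.range (cnt a v), t ^ j = 0 := by
          intro v _ hv
          have hc : cnt a v = 0 := by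
            rw [cnt, Finset.card_eq_zero, Finset.filter_eq_empty_iff]
            intro i _ hi
            exact hv (hi ▸ Finset.mem_image_of_mem a (Finset.mem_univ i))
          rw [hc]
          simp
        rw [Finset.sum_subset hsubset hzero]
        have hstep : ∀ v ∈ Finset.range V,
            t ^ (Finset.univ.filter (fun i => v < a i)).card
              * ∑ j ∈ Finset.range (cnt a v), t ^ j = F v - F (v + 1) := by
          intro v _
          rw [hglt v, hterm v]
        rw [Finset.sum_congr rfl hstep, Finset.sum_range_sub' F V]
        have hG0 : G 0 = n + 1 := by
          simp only [hG]
          rw [Finset.filter_true_of_mem (fun i _ => Nat.zero_le _)]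
          simp
        have hGV : G V = 0 := by
          rw [hG, Finset.card_eq_zero, Finset.filter_eq_empty_iff]
          intro i _
          simp only [hV, not_le]
          exact Nat.lt_succ_of_le (Finset.le_sup (Finset.mem_univ i))
        simp only [hF, hG0, hGV]
        simp
      rw [htel, tfact_succ]
      ring

/-- Let `b` be sorted with respect to the (constant) top-row value `c`.  Then the sum of
`t^{inv(w; c)}` over all distinct rearrangements `w` of `b` equals the `t`-multinomial
coefficient of the multiplicities of the distinct entries of `b` (stated in
denominator-cleared form). -/
theorem stmt14 {R : Type*} [CommRing R] (t : R) {n : ℕ} (c : ℕ) (b : Fin n → ℕ)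
    (hb : SortedWrt c b) :
    (∑ w ∈ Finset.image (fun σ : Equiv.Perm (Fin n) => b ∘ σ) Finset.univ,
        t ^ invc c w) *
      ∏ v ∈ Finset.image b Finset.univ,
        tfact t ((Finset.univ.filter (fun i => b i = v)).card) =
    tfact t n := by
  classical
  set S : ℕ := Finset.univ.sup b with hS
  set B : ℕ := S + 1 with hB
  set φ : ℕ → ℕ := fun x => if c < x then x else x + B with hφ
  have hle : ∀ i, b i ≤ S := fun i => Finset.le_sup (Finset.mem_univ i)
  have hinj : ∀ x y, x ≤ S → y ≤ S → φ x = φ y → x = y := by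
    intro x y hx hy h
    simp only [hφ] at h
    split_ifs at h <;> omega
  have hccw : ∀ x y, x ≤ S → y ≤ S → (ccw x y c ↔ φ x < φ y) := by
    intro x y hx hy
    simp only [hφ]
    unfold ccw
    split_ifs <;> omega
  have h1 : ∀ σ : Equiv.Perm (Fin n), invc c (b ∘ σ) = myinv ((φ ∘ b) ∘ σ) := by
    intro σ
    unfold invc myinv
    congr 1
    apply Finset.filter_congr
    intro p _
    simp only [Function.comp, eq_iff_iff]
    exact and_congr_right fun _ => hccw _ _ (hle _) (hle _)
  have h2 : (∑ w ∈ Finset.image (fun σ : Equiv.Perm (Fin n) => b ∘ σ) Finset.univ,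
        t ^ invc c w)
      = ∑ w ∈ Finset.image (fun σ : Equiv.Perm (Fin n) => (φ ∘ b) ∘ σ) Finset.univ,
        t ^ myinv w := by
    apply Finset.sum_bij (fun w _ => φ ∘ w)
    · intro w hw
      obtain ⟨σ, -, rfl⟩ := Finset.mem_image.mp hw
      exact Finset.mem_image_of_mem _ (Finset.mem_univ σ)
    · intro w₁ hw₁ w₂ hw₂ h
      obtain ⟨σ₁, -, rfl⟩ := Finset.mem_image.mp hw₁
      obtain ⟨σ₂, -, rfl⟩ := Finset.mem_image.mp hw₂
      funext i
      exact hinj _ _ (hle _) (hle _) (congrFun h i)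
    · intro w' hw'
      obtain ⟨σ, -, rfl⟩ := Finset.mem_image.mp hw'
      exact ⟨b ∘ σ, Finset.mem_image_of_mem _ (Finset.mem_univ σ), rfl⟩
    · intro w hw
      obtain ⟨σ, -, rfl⟩ := Finset.mem_image.mp hw
      rw [h1 σ]
      rfl
  have h3 : (∏ v ∈ Finset.image b Finset.univ,
        tfact t ((Finset.univ.filter (fun i => b i = v)).card))
      = ∏ u ∈ Finset.image (φ ∘ b) Finset.univ, tfact t (cnt (φ ∘ b) u) := by
    have himg : Finset.image (φ ∘ b) Finset.univ
        = Finset.image φ (Finset.image b Finset.univ) := by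
      rw [Finset.image_image]
    have hinj' : ∀ x ∈ Finset.image b Finset.univ, ∀ y ∈ Finset.image b Finset.univ,
        φ x = φ y → x = y := by
      intro x hx y hy h
      obtain ⟨i, -, rfl⟩ := Finset.mem_image.mp hx
      obtain ⟨j, -, rfl⟩ := Finset.mem_image.mp hy
      exact hinj _ _ (hle _) (hle _) h
    rw [himg, Finset.prod_image hinj']
    apply Finset.prod_congr rfl
    intro v hv
    obtain ⟨i₀, -, rfl⟩ := Finset.mem_image.mp hv
    congr 1
    unfold cnt
    congr 1
    apply Finset.filter_congr
    intro i _
    simp only [Function.comp, eq_iff_iff]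
    constructor
    · intro h; rw [h]
    · intro h; exact hinj _ _ (hle _) (hle _) h
  rw [h2, h3]
  exact core t n (φ ∘ b)
end
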